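/- Fix a weighted graph G and k ≥ 0, and define φ ~ ψ for φ, ψ ∈ V(G)^k iff hom_φ(F,G) = hom_ψ(F,G) for all k-labeled graphs F. If φ ~ ψ and μ ∈ V(G)^{k+1} restricts to φ on [1,k], then there exists ν ∈ V(G)^{k+1} restricting to ψ on [1,k] with μ ~ ν (as elements of V(G)^{k+1}). -/

import Mathlib

open scoped BigOperators Classical

/-- A `k`-labeled graph: a finite multigraph (no loops) with `k` distinct
nodes labeled `1, …, k`. -/
structure KGraph (k : ℕ) where
  V : Type
  [fV : Fintype V]
  [dV : DecidableEq V]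
  lab : Fin k → V
  lab_inj : Function.Injective lab
  edges : Multiset (V × V)
  loopless : ∀ e ∈ edges, e.1 ≠ e.2

attribute [instance] KGraph.fV KGraph.dV

/-- The weighted partial homomorphism number `hom_φ(F, G)`, for a weighted graph `G`
on node set `W` with node weights `α` and edge weights `β`. -/
noncomputable def homPhi {k : ℕ} {W : Type} [Fintype W] [DecidableEq W]
    (α : W → ℝ) (β : W → W → ℝ) (F : KGraph k) (φ : Fin k → W) : ℝ :=
  ∑ ψ ∈ Finset.univ.filter (fun ψ : F.V → W => ψ ∘ F.lab = φ),
    ((∏ u, α (ψ u)) / ∏ i, α (φ i)) *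
      (F.edges.map (fun e => β (ψ e.1) (ψ e.2))).prod

/-- The full weighted homomorphism number `hom(F, G)` (labels ignored). -/
noncomputable def homT {k : ℕ} {W : Type} [Fintype W] [DecidableEq W]
    (α : W → ℝ) (β : W → W → ℝ) (F : KGraph k) : ℝ :=
  ∑ ψ : F.V → W, (∏ u, α (ψ u)) * (F.edges.map (fun e => β (ψ e.1) (ψ e.2))).prod

/-- Embedding of the vertices of `F₂` into the gluing product `F₁F₂`. -/
noncomputable def KGraph.emb {k : ℕ} (F₁ F₂ : KGraph k) (v : F₂.V) :
    F₁.V ⊕ {v : F₂.V // v ∉ Set.range F₂.lab} :=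
  if h : v ∈ Set.range F₂.lab then
    Sum.inl (F₁.lab ((Equiv.ofInjective F₂.lab F₂.lab_inj).symm ⟨v, h⟩))
  else Sum.inr ⟨v, h⟩

theorem KGraph.emb_inj {k : ℕ} (F₁ F₂ : KGraph k) :
    Function.Injective (KGraph.emb F₁ F₂) := by
  intro a b hab
  by_cases h1 : a ∈ Set.range F₂.lab <;> by_cases h2 : b ∈ Set.range F₂.lab
  · rw [KGraph.emb, dif_pos h1, KGraph.emb, dif_pos h2] at hab
    have h3 := F₁.lab_inj (Sum.inl.inj hab)
    have h4 := (Equiv.ofInjective F₂.lab F₂.lab_inj).symm.injective h3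
    simpa using congrArg Subtype.val h4
  · rw [KGraph.emb, dif_pos h1, KGraph.emb, dif_neg h2] at hab
    exact absurd hab (by simp)
  · rw [KGraph.emb, dif_neg h1, KGraph.emb, dif_pos h2] at hab
    exact absurd hab (by simp)
  · rw [KGraph.emb, dif_neg h1, KGraph.emb, dif_neg h2] at hab
    simpa using Sum.inr.inj hab

/-- The gluing product `F₁F₂` of two `k`-labeled graphs: take the disjoint union
and identify equally-labeled nodes. -/
noncomputable def glue {k : ℕ} (F₁ F₂ : KGraph k) : KGraph k where
  V := F₁.V ⊕ {v : F₂.V // v ∉ Set.range F₂.lab}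
  lab := fun i => Sum.inl (F₁.lab i)
  lab_inj := Sum.inl_injective.comp F₁.lab_inj
  edges := F₁.edges.map (fun e => (Sum.inl e.1, Sum.inl e.2)) +
    F₂.edges.map (fun e => (KGraph.emb F₁ F₂ e.1, KGraph.emb F₁ F₂ e.2))
  loopless := by
    intro e he
    simp only [Multiset.mem_add, Multiset.mem_map] at he
    rcases he with ⟨a, ha, rfl⟩ | ⟨a, ha, rfl⟩
    · simpa using F₁.loopless a ha
    · exact fun h => F₂.loopless a ha (KGraph.emb_inj F₁ F₂ h)

/-- `σ` is an automorphism of the weighted graph given by `(α, β)`. -/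
def IsAut {W : Type} (α : W → ℝ) (β : W → W → ℝ) (σ : Equiv.Perm W) : Prop :=
  (∀ v, α (σ v) = α v) ∧ ∀ u v, β (σ u) (σ v) = β u v

/-- The number of orbits of `Aut(G)` acting coordinatewise on `V(G)^k`. -/
noncomputable def orbCount {W : Type} [Fintype W] (α : W → ℝ) (β : W → W → ℝ)
    (k : ℕ) : ℕ :=
  Nat.card (Quot (fun φ ψ : Fin k → W =>
    ∃ σ : Equiv.Perm W, IsAut α β σ ∧ ψ = σ ∘ φ))

-- auxiliary
lemma KGraph.emb_lab {k : ℕ} (F₁ F₂ : KGraph k) (i : Fin k) :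
    KGraph.emb F₁ F₂ (F₂.lab i) = Sum.inl (F₁.lab i) := by
  have h : F₂.lab i ∈ Set.range F₂.lab := ⟨i, rfl⟩
  rw [KGraph.emb, dif_pos h]
  congr 1
  apply congrArg
  apply F₂.lab_inj
  exact congrArg Subtype.val ((Equiv.ofInjective F₂.lab F₂.lab_inj).apply_symm_apply ⟨F₂.lab i, h⟩)

lemma prod_split {k m : ℕ} (α : Fin m → ℝ) (F : KGraph k) (ρ : Fin k → Fin m)
    (ψ : F.V → Fin m) (hψ : ψ ∘ F.lab = ρ) :
    ∏ v, α (ψ v) = (∏ i, α (ρ i)) * ∏ s : {v : F.V // v ∉ Set.range F.lab}, α (ψ s.1) := by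
  classical
  rw [← (Equiv.sumCompl (fun v => v ∈ Set.range F.lab)).prod_comp (fun v => α (ψ v)),
    Fintype.prod_sum_type]
  simp only [Equiv.sumCompl_apply_inl, Equiv.sumCompl_apply_inr]
  congr 1
  · rw [← (Equiv.ofInjective F.lab F.lab_inj).prod_comp (fun v => α (ψ v.1))]
    refine Finset.prod_congr rfl fun i _ => ?_
    simp [← congrFun hψ i]

lemma homPhi_glue {k m : ℕ} (α : Fin m → ℝ) (β : Fin m → Fin m → ℝ) (hα : ∀ i, 0 < α i)
    (F₁ F₂ : KGraph k) (ρ : Fin k → Fin m) :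
    homPhi α β (glue F₁ F₂) ρ = homPhi α β F₁ ρ * homPhi α β F₂ ρ := by
  classical
  have hD : (∏ i, α (ρ i)) ≠ 0 := Finset.prod_ne_zero_iff.2 fun i _ => (hα (ρ i)).ne'
  unfold homPhi
  rw [Finset.sum_mul_sum, ← Finset.sum_product']
  refine Finset.sum_nbij'
    (fun Ψ : (glue F₁ F₂).V → Fin m => (Ψ ∘ Sum.inl, Ψ ∘ KGraph.emb F₁ F₂))
    (fun p => Sum.elim p.1 (fun s => p.2 s.1)) ?_ ?_ ?_ ?_ ?_
  · intro Ψ hΨ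
    simp only [Finset.mem_filter, Finset.mem_univ, true_and] at hΨ
    rw [Finset.mem_product]
    constructor
    · simp only [Finset.mem_filter, Finset.mem_univ, true_and]
      exact hΨ
    · simp only [Finset.mem_filter, Finset.mem_univ, true_and]
      funext i
      show Ψ (KGraph.emb F₁ F₂ (F₂.lab i)) = ρ i
      rw [KGraph.emb_lab]
      exact congrFun hΨ i
  · intro p hp
    rw [Finset.mem_product] at hp
    simp only [Finset.mem_filter, Finset.mem_univ, true_and] at hp ⊢
    refine Finset.mem_filter.2 ⟨Finset.mem_univ _, ?_⟩
    funext i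
    show p.1 (F₁.lab i) = ρ i
    exact congrFun hp.1 i
  · intro Ψ _
    funext u
    cases u with
    | inl a => rfl
    | inr s =>
      show Ψ (KGraph.emb F₁ F₂ s.1) = Ψ (Sum.inr s)
      rw [KGraph.emb, dif_neg s.2]
  · intro p hp
    rw [Finset.mem_product] at hp
    simp only [Finset.mem_filter, Finset.mem_univ, true_and] at hp
    obtain ⟨h1, h2⟩ := hp
    refine Prod.ext ?_ ?_
    · rfl
    · show (Sum.elim p.1 (fun s => p.2 s.1)) ∘ KGraph.emb F₁ F₂ = p.2
      funext v
      by_cases h : v ∈ Set.range F₂.lab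
      · obtain ⟨i, rfl⟩ := h
        show Sum.elim p.1 (fun s => p.2 s.1) (KGraph.emb F₁ F₂ (F₂.lab i)) = p.2 (F₂.lab i)
        rw [KGraph.emb_lab]
        exact (congrFun h1 i).trans (congrFun h2 i).symm
      · show Sum.elim p.1 (fun s => p.2 s.1) (KGraph.emb F₁ F₂ v) = p.2 v
        rw [KGraph.emb, dif_neg h]
        rfl
  · intro Ψ hΨ
    simp only [Finset.mem_filter, Finset.mem_univ, true_and] at hΨ
    have hψ₂ : (Ψ ∘ KGraph.emb F₁ F₂) ∘ F₂.lab = ρ := by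
      funext i
      show Ψ (KGraph.emb F₁ F₂ (F₂.lab i)) = ρ i
      rw [KGraph.emb_lab]
      exact congrFun hΨ i
    have hw : (∏ u, α (Ψ u)) =
        (∏ a, α (Ψ (Sum.inl a))) *
          ∏ s : {v : F₂.V // v ∉ Set.range F₂.lab}, α (Ψ (Sum.inr s)) :=
      Fintype.prod_sum_type _
    have hs : ∀ s : {v : F₂.V // v ∉ Set.range F₂.lab},
        Ψ (KGraph.emb F₁ F₂ s.1) = Ψ (Sum.inr s) := by
      intro s
      rw [KGraph.emb, dif_neg s.2]
    have hw2 : (∏ v, α ((Ψ ∘ KGraph.emb F₁ F₂) v)) =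
        (∏ i, α (ρ i)) *
          ∏ s : {v : F₂.V // v ∉ Set.range F₂.lab}, α (Ψ (Sum.inr s)) := by
      rw [prod_split α F₂ ρ _ hψ₂]
      congr 1
      exact Finset.prod_congr rfl fun s _ => by rw [show ((Ψ ∘ KGraph.emb F₁ F₂) s.1) = Ψ (Sum.inr s) from hs s]
    have he : ((glue F₁ F₂).edges.map (fun e => β (Ψ e.1) (Ψ e.2))).prod =
        (F₁.edges.map (fun e => β ((Ψ ∘ Sum.inl) e.1) ((Ψ ∘ Sum.inl) e.2))).prod *
        (F₂.edges.map (fun e => β ((Ψ ∘ KGraph.emb F₁ F₂) e.1) ((Ψ ∘ KGraph.emb F₁ F₂) e.2))).prod := by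
      show ((F₁.edges.map (fun e : F₁.V × F₁.V =>
          ((Sum.inl e.1 : F₁.V ⊕ {v : F₂.V // v ∉ Set.range F₂.lab}), Sum.inl e.2)) +
        F₂.edges.map (fun e : F₂.V × F₂.V => (KGraph.emb F₁ F₂ e.1, KGraph.emb F₁ F₂ e.2))).map
          (fun e : (F₁.V ⊕ {v : F₂.V // v ∉ Set.range F₂.lab}) ×
              (F₁.V ⊕ {v : F₂.V // v ∉ Set.range F₂.lab}) => β (Ψ e.1) (Ψ e.2))).prod = _
      rw [Multiset.map_add, Multiset.prod_add, Multiset.map_map, Multiset.map_map]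
      rfl
    rw [hw, he, hw2]
    field_simp
    dsimp only [Function.comp]
    ring

noncomputable def identG (l : ℕ) : KGraph l where
  V := Fin l
  lab := id
  lab_inj := fun _ _ h => h
  edges := 0
  loopless := by intro e he; simp at he

lemma homPhi_identG {l m : ℕ} (α : Fin m → ℝ) (β : Fin m → Fin m → ℝ) (hα : ∀ i, 0 < α i)
    (ρ : Fin l → Fin m) : homPhi α β (identG l) ρ = 1 := by
  classical
  have hD : (∏ i, α (ρ i)) ≠ 0 := Finset.prod_ne_zero_iff.2 fun i _ => (hα (ρ i)).ne'
  have hf : Finset.univ.filter (fun ψ : (identG l).V → Fin m => ψ ∘ (identG l).lab = ρ)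
      = (@singleton ((identG l).V → Fin m) (Finset ((identG l).V → Fin m)) _ ρ) := by
    ext ψ
    simp only [Finset.mem_filter, Finset.mem_univ, true_and, Finset.mem_singleton]
    exact ⟨fun h => Finset.mem_singleton.2 h, fun h => Finset.mem_singleton.1 h⟩
  rw [homPhi, hf]
  refine (Finset.sum_singleton _ _).trans ?_
  show (∏ u, α (ρ u)) / (∏ i, α (ρ i)) * (Multiset.map _ (0 : Multiset (Fin l × Fin l))).prod = 1
  rw [div_self hD, one_mul]
  rfl

noncomputable def unlabel {k : ℕ} (F : KGraph (k + 1)) : KGraph k where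
  V := F.V
  lab := F.lab ∘ Fin.castSucc
  lab_inj := F.lab_inj.comp (Fin.castSucc_injective k)
  edges := F.edges
  loopless := F.loopless

lemma homPhi_unlabel {k m : ℕ} (α : Fin m → ℝ) (β : Fin m → Fin m → ℝ) (hα : ∀ i, 0 < α i)
    (F : KGraph (k + 1)) (ρ : Fin k → Fin m) :
    homPhi α β (unlabel F) ρ = ∑ x : Fin m, α x * homPhi α β F (Fin.snoc ρ x) := by
  classical
  have key : ∀ x : Fin m,
      Finset.univ.filter (fun ψ : F.V → Fin m => ψ ∘ F.lab = Fin.snoc ρ x) =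
      (Finset.univ.filter (fun ψ : F.V → Fin m => ψ ∘ (unlabel F).lab = ρ)).filter
        (fun ψ => ψ (F.lab (Fin.last k)) = x) := by
    intro x
    ext ψ
    simp only [Finset.mem_filter, Finset.mem_univ, true_and]
    constructor
    · intro hq
      constructor
      · funext i
        show ψ (F.lab (Fin.castSucc i)) = ρ i
        rw [show ψ (F.lab i.castSucc) = (ψ ∘ F.lab) i.castSucc from rfl, hq, Fin.snoc_castSucc]
      · rw [show ψ (F.lab (Fin.last k)) = (ψ ∘ F.lab) (Fin.last k) from rfl, hq, Fin.snoc_last]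
    · rintro ⟨h1, h2⟩
      funext i
      induction i using Fin.lastCases with
      | last => simp only [Fin.snoc_last]; exact h2
      | cast j => simp only [Fin.snoc_castSucc]; exact congrFun h1 j
  have calc1 : ∀ x : Fin m, α x * homPhi α β F (Fin.snoc ρ x) =
      ∑ ψ ∈ (Finset.univ.filter
          (fun ψ : F.V → Fin m => ψ ∘ (unlabel F).lab = ρ)).filter
          (fun ψ => ψ (F.lab (Fin.last k)) = x),
        ((∏ u, α (ψ u)) / ∏ i, α (ρ i)) *
          (F.edges.map (fun e => β (ψ e.1) (ψ e.2))).prod := by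
    intro x
    rw [homPhi, key x, Finset.mul_sum]
    refine Finset.sum_congr rfl fun ψ hψ => ?_
    have hsnoc : (∏ i : Fin (k + 1), α ((Fin.snoc ρ x : Fin (k + 1) → Fin m) i)) = (∏ i : Fin k, α (ρ i)) * α x := by
      rw [Fin.prod_univ_castSucc]
      simp
    rw [hsnoc]
    have hx : α x ≠ 0 := (hα x).ne'
    have hD : (∏ i, α (ρ i)) ≠ 0 := Finset.prod_ne_zero_iff.2 fun i _ => (hα (ρ i)).ne'
    field_simp
  rw [Finset.sum_congr rfl fun x _ => calc1 x]
  rw [Finset.sum_fiberwise_of_maps_to (fun ψ _ => Finset.mem_univ (ψ (F.lab (Fin.last k))))]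
  rfl

noncomputable def glueList {k : ℕ} : List (KGraph (k + 1)) → KGraph (k + 1)
  | [] => identG (k + 1)
  | a :: l => glue a (glueList l)

noncomputable def chi {k m : ℕ} (α : Fin m → ℝ) (β : Fin m → Fin m → ℝ)
    (ρ : Fin (k + 1) → Fin m) : FreeMonoid (KGraph (k + 1)) →* ℝ :=
  FreeMonoid.lift (fun F => homPhi α β F ρ)

lemma chi_apply {k m : ℕ} (α : Fin m → ℝ) (β : Fin m → Fin m → ℝ) (hα : ∀ i, 0 < α i)
    (ρ : Fin (k + 1) → Fin m) (w : FreeMonoid (KGraph (k + 1))) :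
    chi α β ρ w = homPhi α β (glueList w.toList) ρ := by
  induction w using FreeMonoid.recOn with
  | one => rw [map_one]; exact (homPhi_identG α β hα ρ).symm
  | of_mul a w ih =>
    rw [map_mul, show chi α β ρ (FreeMonoid.of a) = homPhi α β a ρ from
      FreeMonoid.lift_eval_of _ a, ih]
    rw [show (FreeMonoid.of a * w).toList = a :: w.toList from rfl]
    rw [show glueList (a :: w.toList) = glue a (glueList w.toList) from rfl]
    exact (homPhi_glue α β hα a (glueList w.toList) ρ).symm

/-- Claim 2: if `φ ~ ψ` in `V(G)^k` and `μ ∈ V(G)^{k+1}` restricts to `φ`,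
then some `ν ∈ V(G)^{k+1}` restricts to `ψ` with `μ ~ ν`. -/
theorem equivalent_extend {m k : ℕ} (α : Fin m → ℝ) (β : Fin m → Fin m → ℝ)
    (hα : ∀ i, 0 < α i) (hβ : ∀ i j, β i j = β j i)
    (φ ψ : Fin k → Fin m)
    (h : ∀ F : KGraph k, homPhi α β F φ = homPhi α β F ψ)
    (μ : Fin (k + 1) → Fin m) (hμ : μ ∘ Fin.castSucc = φ) :
    ∃ ν : Fin (k + 1) → Fin m, ν ∘ Fin.castSucc = ψ ∧
      ∀ F : KGraph (k + 1), homPhi α β F μ = homPhi α β F ν := by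
  classical
  set j := μ (Fin.last k) with hj
  have hμs : μ = Fin.snoc φ j := by
    funext i
    induction i using Fin.lastCases with
    | last => simp [hj]
    | cast i => rw [Fin.snoc_castSucc]; exact congrFun hμ i
  have hrel : ∀ w : FreeMonoid (KGraph (k + 1)),
      ∑ x : Fin m, α x * chi α β (Fin.snoc φ x) w
        = ∑ x : Fin m, α x * chi α β (Fin.snoc ψ x) w := by
    intro w
    simp only [chi_apply α β hα]
    rw [← homPhi_unlabel α β hα _ φ, ← homPhi_unlabel α β hα _ ψ]
    exact h _
  let c : (FreeMonoid (KGraph (k + 1)) →* ℝ) →₀ ℝ :=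
    ∑ x : Fin m, (α x • Finsupp.single (chi α β (Fin.snoc φ x)) 1
      - α x • Finsupp.single (chi α β (Fin.snoc ψ x)) 1)
  have hc : c = 0 := by
    refine linearIndependent_iff.mp
      (linearIndependent_monoidHom (FreeMonoid (KGraph (k + 1))) ℝ) c ?_
    rw [map_sum]
    simp only [map_sub, map_smul, Finsupp.linearCombination_single]
    funext w
    simp only [Finset.sum_apply, Pi.sub_apply, Pi.smul_apply, smul_eq_mul, one_smul,
      Pi.zero_apply]
    rw [Finset.sum_sub_distrib]
    rw [sub_eq_zero]
    exact hrel w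
  have hceval := DFunLike.congr_fun hc (chi α β μ)
  simp only [Finsupp.coe_zero, Pi.zero_apply, c, Finsupp.finset_sum_apply,
    Finsupp.sub_apply, Finsupp.smul_apply, Finsupp.single_apply, smul_eq_mul] at hceval
  rw [Finset.sum_sub_distrib, sub_eq_zero] at hceval
  have hpos : 0 < ∑ x : Fin m,
      α x * (if chi α β (Fin.snoc φ x) = chi α β μ then (1 : ℝ) else 0) := by
    refine Finset.sum_pos' (fun x _ => ?_) ⟨j, Finset.mem_univ j, ?_⟩
    · by_cases hx : chi α β (Fin.snoc φ x) = chi α β μ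
      · rw [if_pos hx]; exact le_of_lt (by simpa using hα x)
      · rw [if_neg hx]; simp
    · rw [if_pos (by rw [hμs]), mul_one]; exact hα j
  rw [hceval] at hpos
  obtain ⟨y, _, hy⟩ := Finset.exists_ne_zero_of_sum_ne_zero hpos.ne'
  have hychi : chi α β (Fin.snoc ψ y) = chi α β μ := by
    by_contra hcon
    rw [if_neg hcon, mul_zero] at hy
    exact hy rfl
  refine ⟨Fin.snoc ψ y, ?_, ?_⟩
  · funext i
    exact Fin.snoc_castSucc ..
  · intro F
    have := DFunLike.congr_fun hychi (FreeMonoid.of F)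
    rw [show chi α β (Fin.snoc ψ y) (FreeMonoid.of F) = homPhi α β F (Fin.snoc ψ y) from
      FreeMonoid.lift_eval_of _ F,
      show chi α β μ (FreeMonoid.of F) = homPhi α β F μ from FreeMonoid.lift_eval_of _ F] at this
    exact this.symm
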